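/- arXiv:0802.1456 — 3 statements merged into one kernel-verified Lean document; each statement's English description precedes it below -/
import Mathlib

section
/- For any positive definite symmetric m×m real matrix A with A ≥ γI for some γ > 0, one has log det(A) = min { m·log a − m + tr(A·M) : a > 0, M symmetric, 0 ≤ M ≤ (1/γ)I, det M = a^{−m} }, where the minimum is attained. -/
/-!
The minimum is attained at `M = A⁻¹`, `a = (det A)^(1/m)`, where `tr (A M) = m`. Here
`A⁻¹ ≤ γ⁻¹ I` because `γ⁻¹ I - A⁻¹ = γ⁻¹ A⁻¹ ((A - γ I) A) A⁻¹` and `(A - γ I) A = B² + γ B`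
with `B = A - γ I ≥ 0`. For the lower bound, `C = √A M √A` has `tr C = tr (A M)` and
`det C = det A · det M`, and applying `log λ ≤ λ - 1` to each eigenvalue of `C` gives
`m + log det C ≤ tr C`.
-/

open Matrix Real
open scoped MatrixOrder

namespace Matrix

variable {n : Type*} [Fintype n] [DecidableEq n]

theorem PosDef.card_add_log_det_le_trace {C : Matrix n n ℝ} (hC : C.PosDef) :
    Fintype.card n + log C.det ≤ C.trace := by
  have hpos := hC.eigenvalues_pos
  rw [hC.isHermitian.trace_eq_sum_eigenvalues, hC.isHermitian.det_eq_prod_eigenvalues]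
  simp only [RCLike.ofReal_real_eq_id, id_eq]
  rw [log_prod fun i _ => (hpos i).ne', ← Finset.card_univ, Finset.cast_card,
    ← Finset.sum_add_distrib]
  gcongr with i
  linarith [log_le_sub_one_of_pos (hpos i)]

theorem PosDef.card_add_log_det_add_log_det_le_trace_mul {A M : Matrix n n ℝ} (hA : A.PosDef)
    (hM : M.PosSemidef) (hMdet : 0 < M.det) :
    Fintype.card n + log A.det + log M.det ≤ (A * M).trace := by
  set S := CFC.sqrt A
  have hSS : S * S = A := CFC.sqrt_mul_sqrt_self A hA.posSemidef.nonneg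
  have hSH : Sᴴ = S := (CFC.sqrt_nonneg A).posSemidef.isHermitian
  have hdet : (S * M * S).det = A.det * M.det := by
    rw [det_mul, det_mul, ← hSS, det_mul]; ring
  have hC : (S * M * S).PosDef := by
    refine (hSH ▸ hM.mul_mul_conjTranspose_same S).posDef_iff_det_ne_zero.mpr ?_
    rw [hdet]; exact (mul_pos hA.det_pos hMdet).ne'
  have htr : (S * M * S).trace = (A * M).trace := by
    rw [trace_mul_comm, ← Matrix.mul_assoc, hSS]
  have := hC.card_add_log_det_le_trace
  rwa [htr, hdet, log_mul hA.det_pos.ne' hMdet.ne', ← add_assoc] at this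

theorem PosDef.inv_le_smul_one_of_smul_one_le {A : Matrix n n ℝ} (hA : A.PosDef) {γ : ℝ}
    (hγ : 0 < γ) (hAγ : γ • 1 ≤ A) : A⁻¹ ≤ γ⁻¹ • 1 := by
  change (A - γ • 1).PosSemidef at hAγ
  change (γ⁻¹ • 1 - A⁻¹).PosSemidef
  set B := A - γ • 1
  have hBA : (B * A).PosSemidef := by
    have hBA_eq : B * A = Bᴴ * B + γ • B := by
      rw [hAγ.isHermitian.eq, ← sub_add_cancel A (γ • 1), Matrix.mul_add, Matrix.mul_smul,
        Matrix.mul_one]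
    rw [hBA_eq]
    exact (posSemidef_conjTranspose_mul_self B).add (hAγ.smul hγ.le)
  have hconj := (hBA.conjTranspose_mul_mul_same A⁻¹).smul (inv_nonneg.mpr hγ.le)
  have hAA : A * A⁻¹ = 1 := mul_nonsing_inv A hA.det_pos.ne'.isUnit
  have hAA' : A⁻¹ * A = 1 := nonsing_inv_mul A hA.det_pos.ne'.isUnit
  convert hconj using 1
  rw [hA.inv.isHermitian.eq, Matrix.mul_assoc, Matrix.mul_assoc, hAA, Matrix.mul_one]
  simp only [B, Matrix.mul_sub, hAA', Matrix.mul_smul, Matrix.mul_one, smul_sub, smul_smul,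
    inv_mul_cancel₀ hγ.ne', one_smul]

end Matrix

/-- Variational formula for `log det`: for a symmetric positive definite matrix `A ≥ γ I`,
`log det A` is the minimum (attained) of `m log a - m + tr (A M)` over `a > 0` and
symmetric `M` with `0 ≤ M ≤ (1/γ) I` and `det M = a⁻ᵐ`. -/
theorem logdet_variational_formula (m : ℕ) (hm : 0 < m) (γ : ℝ) (hγ : 0 < γ)
    (A : Matrix (Fin m) (Fin m) ℝ) (hA : A.PosDef)
    (hAγ : (A - γ • (1 : Matrix (Fin m) (Fin m) ℝ)).PosSemidef) :
    IsLeast {v : ℝ | ∃ (a : ℝ) (M : Matrix (Fin m) (Fin m) ℝ), 0 < a ∧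
        M.PosSemidef ∧ ((γ⁻¹ • (1 : Matrix (Fin m) (Fin m) ℝ)) - M).PosSemidef ∧
        M.det = a ^ (-(m : ℤ)) ∧
        v = m * Real.log a - m + (A * M).trace}
      (Real.log A.det) := by
  constructor
  · set a := A.det ^ (m⁻¹ : ℝ)
    have ham : a ^ m = A.det := rpow_inv_natCast_pow hA.det_pos.le hm.ne'
    refine ⟨a, A⁻¹, rpow_pos_of_pos hA.det_pos _, hA.inv.posSemidef,
      hA.inv_le_smul_one_of_smul_one_le hγ hAγ, ?_, ?_⟩
    · rw [det_nonsing_inv, Ring.inverse_eq_inv', _root_.zpow_neg, zpow_natCast, ham]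
    · rw [mul_nonsing_inv A hA.det_pos.ne'.isUnit, trace_one, Fintype.card_fin, ← log_pow, ham]
      ring
  · rintro v ⟨a, M, ha, hM, -, hdet, rfl⟩
    have hMdet : 0 < M.det := hdet ▸ zpow_pos ha _
    have := hA.card_add_log_det_add_log_det_le_trace_mul hM hMdet
    rw [hdet, log_zpow, Fintype.card_fin] at this
    push_cast at this
    linarith
end

section
/- If A is a positive definite symmetric m×m real matrix with A ≥ γI, and M is symmetric with 0 ≤ M ≤ (1/γ)I and det M = a^{−m} for some a > 0, then m·log a − m + tr(A·M) ≥ log det A. -/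
/-!
Write `A = Xᴴ X`. Then `B = X M Xᴴ` is positive definite with `det B = det A · det M` and
`tr B = tr (A M)`, and `log det B ≤ tr B - m` is the inequality `log λ ≤ λ - 1` summed over the
eigenvalues of `B`. Finally `log det M = -m log a`.
-/

namespace Matrix

variable {n : Type*} [Fintype n] [DecidableEq n]

theorem PosDef.log_det_le_trace_sub_card {B : Matrix n n ℝ} (hB : B.PosDef) :
    Real.log B.det ≤ B.trace - Fintype.card n := by
  have hdet : B.det = ∏ i, hB.1.eigenvalues i := by
    simpa using hB.1.det_eq_prod_eigenvalues
  have htrace : B.trace = ∑ i, hB.1.eigenvalues i := by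
    simpa using hB.1.trace_eq_sum_eigenvalues
  rw [hdet, htrace, Real.log_prod fun i _ => (hB.eigenvalues_pos i).ne']
  calc ∑ i, Real.log (hB.1.eigenvalues i) ≤ ∑ i, (hB.1.eigenvalues i - 1) :=
        Finset.sum_le_sum fun i _ => Real.log_le_sub_one_of_pos (hB.eigenvalues_pos i)
    _ = ∑ i, hB.1.eigenvalues i - Fintype.card n := by
        simp [Finset.sum_sub_distrib]

open scoped MatrixOrder in
theorem PosDef.log_det_add_log_det_le_trace_mul_sub_card {A M : Matrix n n ℝ}
    (hA : A.PosDef) (hM : M.PosDef) :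
    Real.log A.det + Real.log M.det ≤ (A * M).trace - Fintype.card n := by
  obtain ⟨X, rfl⟩ := CStarAlgebra.nonneg_iff_eq_star_mul_self.mp hA.posSemidef.nonneg
  rw [star_eq_conjTranspose] at hA ⊢
  have hdet : (X * M * Xᴴ).det = (Xᴴ * X).det * M.det := by
    simp only [det_mul]
    ring
  have hpos : (X * M * Xᴴ).PosDef := by
    refine hM.posSemidef.mul_mul_conjTranspose_same X |>.posDef_iff_det_ne_zero.mpr ?_
    rw [hdet]
    exact (mul_pos hA.det_pos hM.det_pos).ne'
  have htrace : (X * M * Xᴴ).trace = (Xᴴ * X * M).trace := by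
    rw [trace_mul_cycle]
  rw [← Real.log_mul hA.det_pos.ne' hM.det_pos.ne', ← hdet, ← htrace]
  exact hpos.log_det_le_trace_sub_card

end Matrix

theorem logdet_variational_ineq_general (m : ℕ)
    (A M : Matrix (Fin m) (Fin m) ℝ) (hA : A.PosDef)
    (hM : M.PosSemidef)
    (a : ℝ) (ha : 0 < a) (hdet : M.det = a ^ (-(m : ℤ))) :
    Real.log A.det ≤ m * Real.log a - m + (A * M).trace := by
  have hMpos : M.PosDef := hM.posDef_iff_det_ne_zero.mpr (by rw [hdet]; positivity)
  have hlogM : Real.log M.det = -(m * Real.log a) := by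
    rw [hdet, Real.log_zpow]
    push_cast
    ring
  have key := hA.log_det_add_log_det_le_trace_mul_sub_card hMpos
  rw [hlogM, Fintype.card_fin] at key
  linarith

/-- The inequality direction of the variational formula for `log det`:
if `A ≥ γ I > 0`, `0 ≤ M ≤ (1/γ) I` and `det M = a⁻ᵐ` with `a > 0`, then
`m log a - m + tr (A M) ≥ log det A`. -/
theorem logdet_variational_ineq (m : ℕ) (γ : ℝ) (hγ : 0 < γ)
    (A M : Matrix (Fin m) (Fin m) ℝ) (hA : A.PosDef)
    (hAγ : (A - γ • (1 : Matrix (Fin m) (Fin m) ℝ)).PosSemidef)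
    (hM : M.PosSemidef)
    (hMγ : ((γ⁻¹ • (1 : Matrix (Fin m) (Fin m) ℝ)) - M).PosSemidef)
    (a : ℝ) (ha : 0 < a) (hdet : M.det = a ^ (-(m : ℤ))) :
    Real.log A.det ≤ m * Real.log a - m + (A * M).trace :=
  logdet_variational_ineq_general m A M hA hM a ha hdet
end

section
/- Let u : Ω → ℝ be an upper semicontinuous function on an open set Ω ⊆ ℝ^n that is X-convex with respect to C² vector fields X₁,…,X_m, i.e., for every φ ∈ C²(Ω) and every x ∈ argmax(u − φ), the symmetrized horizontal Hessian D²_X φ(x) is positive semidefinite. If ψ(x) = (ε/1)·e^{μ Σ_{i=1}^m x_i²/2} with ε, μ > 0 and the vector fields are generators of a Carnot group (so X_j = ∂/∂x_j + Σ_{i>m} σ_{ij}(x₁,…,x_{i−1})∂/∂x_i), then D²_X ψ(x) ≥ εμ I for all x. Consequently u + ψ is uniformly X-convex with constant γ = εμ. -/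
open Matrix Real

/-- The vector field `X_j = ∂/∂x_j + ∑_{i=m+1}^n σ_{ij}(x) ∂/∂x_i` of a Carnot-type
generator, as a map assigning to each point the coefficient vector. -/
noncomputable def carnotVField (n m : ℕ) (h : m ≤ n)
    (σ : Fin n → Fin m → (Fin n → ℝ) → ℝ) (j : Fin m) (x : Fin n → ℝ) :
    Fin n → ℝ :=
  fun i => (if i = Fin.castLE h j then 1 else 0) +
    (if m ≤ (i : ℕ) then σ i j x else 0)

/-- The derivative `X_j u` of `u` along the `j`-th generator. -/
noncomputable def Xop (n m : ℕ) (h : m ≤ n)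
    (σ : Fin n → Fin m → (Fin n → ℝ) → ℝ) (j : Fin m)
    (u : (Fin n → ℝ) → ℝ) (x : Fin n → ℝ) : ℝ :=
  fderiv ℝ u x (carnotVField n m h σ j x)

/-- The symmetrized horizontal Hessian `D²_X u`. -/
noncomputable def D2X (n m : ℕ) (h : m ≤ n)
    (σ : Fin n → Fin m → (Fin n → ℝ) → ℝ)
    (u : (Fin n → ℝ) → ℝ) (x : Fin n → ℝ) : Matrix (Fin m) (Fin m) ℝ :=
  Matrix.of fun i j =>
    (Xop n m h σ i (Xop n m h σ j u) x + Xop n m h σ j (Xop n m h σ i u) x) / 2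

noncomputable abbrev prCLM (n : ℕ) (i : Fin n) : (Fin n → ℝ) →L[ℝ] ℝ :=
  ContinuousLinearMap.proj i

lemma hasFDerivAt_fexp (n m : ℕ) (h : m ≤ n) (μ : ℝ) (x : Fin n → ℝ) :
    HasFDerivAt (fun x : Fin n → ℝ => μ * (∑ j : Fin m, (x (Fin.castLE h j)) ^ 2) / 2)
      (∑ j : Fin m, (μ * x (Fin.castLE h j)) • prCLM n (Fin.castLE h j)) x := by
  have hfun : (fun x : Fin n → ℝ => μ * (∑ j : Fin m, (x (Fin.castLE h j)) ^ 2) / 2)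
      = fun x => ∑ j : Fin m, μ / 2 * (x (Fin.castLE h j) * x (Fin.castLE h j)) := by
    funext x; rw [Finset.mul_sum, Finset.sum_div]
    exact Finset.sum_congr rfl fun j _ => by ring
  rw [hfun]
  refine HasFDerivAt.fun_sum fun j _ => ?_
  have hp : HasFDerivAt (fun x : Fin n → ℝ => x (Fin.castLE h j)) (prCLM n (Fin.castLE h j)) x :=
    (prCLM n (Fin.castLE h j)).hasFDerivAt
  have H := (hp.fun_mul hp).const_mul (μ / 2)
  refine H.congr_fderiv ?_
  ext v
  simp [prCLM]
  ring

lemma hasFDerivAt_psi (n m : ℕ) (h : m ≤ n) (ε μ : ℝ) (x : Fin n → ℝ) :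
    HasFDerivAt (fun x : Fin n → ℝ =>
        ε * Real.exp (μ * (∑ j : Fin m, (x (Fin.castLE h j)) ^ 2) / 2))
      ((ε * μ * Real.exp (μ * (∑ j : Fin m, (x (Fin.castLE h j)) ^ 2) / 2)) •
        (∑ j : Fin m, x (Fin.castLE h j) • prCLM n (Fin.castLE h j))) x := by
  have H := ((hasFDerivAt_fexp n m h μ x).exp).const_mul ε
  refine H.congr_fderiv ?_
  ext v
  simp [prCLM, Finset.mul_sum]
  exact Finset.sum_congr rfl fun j _ => by ring

-- value of the vector field at horizontal coordinates
lemma carnotVField_castLE (n m : ℕ) (h : m ≤ n) (σ : Fin n → Fin m → (Fin n → ℝ) → ℝ)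
    (j k : Fin m) (x : Fin n → ℝ) :
    carnotVField n m h σ j x (Fin.castLE h k) = if k = j then 1 else 0 := by
  unfold carnotVField
  rw [if_neg (by simp : ¬ m ≤ ((Fin.castLE h k : Fin n) : ℕ)), add_zero]
  simp [Fin.castLE_inj]

lemma Xop_psi (n m : ℕ) (h : m ≤ n) (σ : Fin n → Fin m → (Fin n → ℝ) → ℝ)
    (ε μ : ℝ) (j : Fin m) :
    Xop n m h σ j (fun x : Fin n → ℝ =>
        ε * Real.exp (μ * (∑ i : Fin m, (x (Fin.castLE h i)) ^ 2) / 2))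
      = fun x => ε * μ * x (Fin.castLE h j) *
          Real.exp (μ * (∑ i : Fin m, (x (Fin.castLE h i)) ^ 2) / 2) := by
  funext x
  unfold Xop
  rw [(hasFDerivAt_psi n m h ε μ x).fderiv]
  have : ∀ k : Fin m, x (Fin.castLE h k) * carnotVField n m h σ j x (Fin.castLE h k)
      = if k = j then x (Fin.castLE h j) else 0 := by
    intro k
    rw [carnotVField_castLE]
    by_cases hk : k = j <;> simp [hk]
  simp only [ContinuousLinearMap.smul_apply, ContinuousLinearMap.sum_apply,
    ContinuousLinearMap.smul_apply, prCLM, ContinuousLinearMap.proj_apply, smul_eq_mul]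
  rw [Finset.sum_congr rfl fun k _ => this k, Finset.sum_ite_eq' Finset.univ j]
  simp
  ring

lemma hasFDerivAt_g (n m : ℕ) (h : m ≤ n) (ε μ : ℝ) (j : Fin m) (x : Fin n → ℝ) :
    HasFDerivAt (fun x : Fin n → ℝ => ε * μ * x (Fin.castLE h j) *
        Real.exp (μ * (∑ i : Fin m, (x (Fin.castLE h i)) ^ 2) / 2))
      ((ε * μ * Real.exp (μ * (∑ i : Fin m, (x (Fin.castLE h i)) ^ 2) / 2)) •
        (prCLM n (Fin.castLE h j) +
          (μ * x (Fin.castLE h j)) • ∑ k : Fin m, x (Fin.castLE h k) • prCLM n (Fin.castLE h k))) x := by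
  have hp : HasFDerivAt (fun x : Fin n → ℝ => x (Fin.castLE h j)) (prCLM n (Fin.castLE h j)) x :=
    (prCLM n (Fin.castLE h j)).hasFDerivAt
  have H := (hp.const_mul (ε * μ)).fun_mul ((hasFDerivAt_fexp n m h μ x).exp)
  refine H.congr_fderiv ?_
  ext v
  simp only [ContinuousLinearMap.add_apply, ContinuousLinearMap.smul_apply,
    ContinuousLinearMap.sum_apply, prCLM, ContinuousLinearMap.proj_apply, smul_eq_mul]
  rw [show (∑ k : Fin m, μ * x (Fin.castLE h k) * v (Fin.castLE h k))
      = μ * ∑ k : Fin m, x (Fin.castLE h k) * v (Fin.castLE h k) by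
    rw [Finset.mul_sum]; exact Finset.sum_congr rfl fun k _ => by ring]
  ring

lemma sum_carnot (n m : ℕ) (h : m ≤ n) (σ : Fin n → Fin m → (Fin n → ℝ) → ℝ)
    (i : Fin m) (x : Fin n → ℝ) :
    ∑ k : Fin m, x (Fin.castLE h k) * carnotVField n m h σ i x (Fin.castLE h k)
      = x (Fin.castLE h i) := by
  rw [Finset.sum_congr rfl (fun k _ => by
    rw [carnotVField_castLE]
    by_cases hk : k = i <;> simp [hk] :
    ∀ k ∈ Finset.univ, x (Fin.castLE h k) * carnotVField n m h σ i x (Fin.castLE h k)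
      = if k = i then x (Fin.castLE h i) else 0)]
  simp

lemma Xop_Xop_psi (n m : ℕ) (h : m ≤ n) (σ : Fin n → Fin m → (Fin n → ℝ) → ℝ)
    (ε μ : ℝ) (i j : Fin m) (x : Fin n → ℝ) :
    Xop n m h σ i (Xop n m h σ j (fun x : Fin n → ℝ =>
        ε * Real.exp (μ * (∑ k : Fin m, (x (Fin.castLE h k)) ^ 2) / 2))) x
      = ε * μ * Real.exp (μ * (∑ k : Fin m, (x (Fin.castLE h k)) ^ 2) / 2) *
          ((if i = j then 1 else 0) + μ * x (Fin.castLE h i) * x (Fin.castLE h j)) := by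
  rw [Xop_psi n m h σ ε μ j]
  unfold Xop
  rw [(hasFDerivAt_g n m h ε μ j x).fderiv]
  simp only [ContinuousLinearMap.add_apply, ContinuousLinearMap.smul_apply,
    ContinuousLinearMap.sum_apply, prCLM, ContinuousLinearMap.proj_apply, smul_eq_mul]
  rw [sum_carnot n m h σ i x, carnotVField_castLE n m h σ i j x]
  by_cases hij : i = j
  · subst hij; rfl
  · rw [if_neg hij, if_neg (fun hji : j = i => hij hji.symm)]; ring

lemma psd_aux {m : ℕ} (a b : ℝ) (ha : 0 ≤ a) (hb : 0 ≤ b) (w : Fin m → ℝ) :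
    (Matrix.of fun i j : Fin m => a * (if i = j then 1 else 0) + b * w i * w j).PosSemidef := by
  refine Matrix.PosSemidef.of_dotProduct_mulVec_nonneg ?_ ?_
  · ext i j
    simp only [Matrix.conjTranspose_apply, Matrix.of_apply, star_trivial]
    by_cases hij : i = j
    · subst hij; rfl
    · rw [if_neg hij, if_neg (fun e : j = i => hij e.symm)]; ring
  · intro y
    have hmv : ∀ i, ((Matrix.of fun i j : Fin m => a * (if i = j then 1 else 0) + b * w i * w j) *ᵥ y) i
        = a * y i + b * w i * ∑ j, w j * y j := by
      intro i
      simp only [Matrix.mulVec, dotProduct, Matrix.of_apply]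
      rw [Finset.sum_congr rfl (fun j _ => by by_cases hij : i = j <;> simp [hij] <;> ring :
        ∀ j ∈ Finset.univ, (a * (if i = j then 1 else 0) + b * w i * w j) * y j
          = a * (if i = j then y j else 0) + b * w i * (w j * y j))]
      rw [Finset.sum_add_distrib, ← Finset.mul_sum, ← Finset.mul_sum, Finset.sum_ite_eq]
      simp
    have key : star y ⬝ᵥ ((Matrix.of fun i j : Fin m =>
          a * (if i = j then 1 else 0) + b * w i * w j) *ᵥ y)
        = a * (∑ i, y i ^ 2) + b * ((∑ i, w i * y i) * (∑ i, w i * y i)) := by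
      simp only [dotProduct, Pi.star_apply, star_trivial]
      rw [Finset.sum_congr rfl fun i _ => by rw [hmv i]]
      rw [Finset.sum_congr rfl (fun i _ => by ring :
        ∀ i ∈ Finset.univ, y i * (a * y i + b * w i * ∑ j, w j * y j)
          = a * y i ^ 2 + b * (∑ j, w j * y j) * (w i * y i))]
      rw [Finset.sum_add_distrib, ← Finset.mul_sum, ← Finset.mul_sum]
      ring
    rw [key]
    have h1 : (0:ℝ) ≤ ∑ i, y i ^ 2 := Finset.sum_nonneg fun i _ => sq_nonneg _
    exact add_nonneg (mul_nonneg ha h1) (mul_nonneg hb (mul_self_nonneg _))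

lemma D2X_psi_sub_psd (n m : ℕ) (h : m ≤ n) (σ : Fin n → Fin m → (Fin n → ℝ) → ℝ)
    (ε μ : ℝ) (hε : 0 < ε) (hμ : 0 < μ) (x : Fin n → ℝ) :
    (D2X n m h σ (fun x : Fin n → ℝ =>
        ε * Real.exp (μ * (∑ k : Fin m, (x (Fin.castLE h k)) ^ 2) / 2)) x
      - (ε * μ) • (1 : Matrix (Fin m) (Fin m) ℝ)).PosSemidef := by
  set e := Real.exp (μ * (∑ k : Fin m, (x (Fin.castLE h k)) ^ 2) / 2) with he
  have harg : 0 ≤ μ * (∑ k : Fin m, (x (Fin.castLE h k)) ^ 2) / 2 := by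
    have : (0:ℝ) ≤ ∑ k : Fin m, (x (Fin.castLE h k)) ^ 2 :=
      Finset.sum_nonneg fun k _ => sq_nonneg _
    positivity
  have he1 : 1 ≤ e := Real.one_le_exp harg
  have hM : D2X n m h σ (fun x : Fin n → ℝ =>
        ε * Real.exp (μ * (∑ k : Fin m, (x (Fin.castLE h k)) ^ 2) / 2)) x
      - (ε * μ) • (1 : Matrix (Fin m) (Fin m) ℝ)
      = Matrix.of fun i j : Fin m => (ε * μ * (e - 1)) * (if i = j then 1 else 0)
          + (ε * μ ^ 2 * e) * x (Fin.castLE h i) * x (Fin.castLE h j) := by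
    ext i j
    simp only [Matrix.sub_apply, Matrix.smul_apply, Matrix.one_apply, Matrix.of_apply,
      D2X, smul_eq_mul]
    rw [Xop_Xop_psi n m h σ ε μ i j x, Xop_Xop_psi n m h σ ε μ j i x]
    rw [← he]
    by_cases hij : i = j
    · subst hij; simp only [if_pos rfl]; ring
    · simp only [if_neg hij, if_neg (show ¬ j = i from fun e => hij e.symm)]; ring
  rw [hM]
  exact psd_aux _ _
    (mul_nonneg (mul_nonneg hε.le hμ.le) (sub_nonneg.2 he1))
    (by positivity) _

lemma contDiff_carnot (n m : ℕ) (h : m ≤ n) (σ : Fin n → Fin m → (Fin n → ℝ) → ℝ)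
    (hσ_smooth : ∀ i j, ContDiff ℝ 2 (σ i j)) (j : Fin m) :
    ContDiff ℝ 1 (carnotVField n m h σ j) := by
  rw [contDiff_pi]
  intro i
  by_cases hm : m ≤ (i : ℕ)
  · simp only [carnotVField, if_pos hm]
    exact contDiff_const.add ((hσ_smooth i j).of_le (by norm_num))
  · simp only [carnotVField, if_neg hm]
    exact contDiff_const.add contDiff_const

lemma contDiff_psi (n m : ℕ) (h : m ≤ n) (ε μ : ℝ) :
    ContDiff ℝ 2 (fun x : Fin n → ℝ =>
      ε * Real.exp (μ * (∑ k : Fin m, (x (Fin.castLE h k)) ^ 2) / 2)) := by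
  refine contDiff_const.mul ((Real.contDiff_exp.of_le le_top).comp ?_)
  refine ContDiff.div_const (contDiff_const.mul (ContDiff.sum fun k _ => ?_)) 2
  exact (prCLM n (Fin.castLE h k)).contDiff.pow 2

lemma Xop_contDiffOn (n m : ℕ) (h : m ≤ n) (σ : Fin n → Fin m → (Fin n → ℝ) → ℝ)
    (hσ_smooth : ∀ i j, ContDiff ℝ 2 (σ i j))
    (Ω : Set (Fin n → ℝ)) (hΩ : IsOpen Ω) (φ : (Fin n → ℝ) → ℝ)
    (hφ : ContDiffOn ℝ 2 φ Ω) (j : Fin m) :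
    ContDiffOn ℝ 1 (Xop n m h σ j φ) Ω := by
  have h1 : ContDiffOn ℝ 1 (fderiv ℝ φ) Ω := hφ.fderiv_of_isOpen hΩ (by norm_num)
  exact h1.clm_apply ((contDiff_carnot n m h σ hσ_smooth j).contDiffOn)

lemma D2X_split (n m : ℕ) (h : m ≤ n) (σ : Fin n → Fin m → (Fin n → ℝ) → ℝ)
    (hσ_smooth : ∀ i j, ContDiff ℝ 2 (σ i j)) (ε μ : ℝ)
    (Ω : Set (Fin n → ℝ)) (hΩ : IsOpen Ω) (φ : (Fin n → ℝ) → ℝ)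
    (hφ : ContDiffOn ℝ 2 φ Ω) (x : Fin n → ℝ) (hx : x ∈ Ω) :
    D2X n m h σ φ x
      = D2X n m h σ (fun y => φ y - ε * Real.exp (μ * (∑ k : Fin m, (y (Fin.castLE h k)) ^ 2) / 2)) x
        + D2X n m h σ (fun y : Fin n → ℝ =>
            ε * Real.exp (μ * (∑ k : Fin m, (y (Fin.castLE h k)) ^ 2) / 2)) x := by
  set ψf := fun y : Fin n → ℝ => ε * Real.exp (μ * (∑ k : Fin m, (y (Fin.castLE h k)) ^ 2) / 2)
    with hψf
  have hφdiff : ∀ y ∈ Ω, DifferentiableAt ℝ φ y := fun y hy =>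
    (hφ.differentiableOn (by norm_num)).differentiableAt (hΩ.mem_nhds hy)
  have hψdiff : ∀ y, DifferentiableAt ℝ ψf y := fun y =>
    (hasFDerivAt_psi n m h ε μ y).differentiableAt
  have hXsub : ∀ (j : Fin m), ∀ y ∈ Ω,
      Xop n m h σ j (fun y => φ y - ψf y) y = Xop n m h σ j φ y - Xop n m h σ j ψf y := by
    intro j y hy
    unfold Xop
    rw [fderiv_fun_sub (hφdiff y hy) (hψdiff y)]
    rfl
  have hXψdiff : ∀ (j : Fin m) (y : Fin n → ℝ), DifferentiableAt ℝ (Xop n m h σ j ψf) y := by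
    intro j y
    rw [hψf, Xop_psi n m h σ ε μ j]
    exact (hasFDerivAt_g n m h ε μ j y).differentiableAt
  have hXφdiff : ∀ j : Fin m, DifferentiableAt ℝ (Xop n m h σ j φ) x := fun j =>
    ((Xop_contDiffOn n m h σ hσ_smooth Ω hΩ φ hφ j).differentiableOn (by norm_num)).differentiableAt
      (hΩ.mem_nhds hx)
  have key : ∀ i j : Fin m,
      Xop n m h σ i (Xop n m h σ j (fun y => φ y - ψf y)) x
        = Xop n m h σ i (Xop n m h σ j φ) x - Xop n m h σ i (Xop n m h σ j ψf) x := by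
    intro i j
    have hev : Xop n m h σ j (fun y => φ y - ψf y) =ᶠ[nhds x]
        fun y => Xop n m h σ j φ y - Xop n m h σ j ψf y :=
      Filter.eventually_of_mem (hΩ.mem_nhds hx) (fun y hy => hXsub j y hy)
    have e1 : Xop n m h σ i (Xop n m h σ j (fun y => φ y - ψf y)) x
        = (fderiv ℝ (Xop n m h σ j φ) x - fderiv ℝ (Xop n m h σ j ψf) x)
            (carnotVField n m h σ i x) := by
      show fderiv ℝ (Xop n m h σ j (fun y => φ y - ψf y)) x (carnotVField n m h σ i x) = _
      rw [hev.fderiv_eq, fderiv_fun_sub (hXφdiff j) (hXψdiff j x)]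
    rw [e1, ContinuousLinearMap.sub_apply]
    rfl
  ext i j
  simp only [D2X, Matrix.of_apply, Matrix.add_apply]
  rw [key i j, key j i]
  ring


/-- If `u` is `X`-convex in viscosity sense on an open set `Ω` (w.r.t. Carnot-type
generators) and `ψ(x) = ε e^{μ ∑_{i≤m} x_i²/2}`, then `D²_X ψ ≥ εμ I` everywhere, and
consequently `u + ψ` is uniformly `X`-convex with constant `γ = εμ`: at every maximum
point of `u + ψ - φ` over `Ω` with `φ ∈ C²(Ω)` we have `D²_X φ(x) ≥ εμ I`. -/
theorem uniformly_Xconvex_perturbation (n m : ℕ) (h : m ≤ n)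
    (ε μ : ℝ) (hε : 0 < ε) (hμ : 0 < μ)
    (σ : Fin n → Fin m → (Fin n → ℝ) → ℝ)
    (hσ_smooth : ∀ i j, ContDiff ℝ 2 (σ i j))
    (hσ_dep : ∀ (i : Fin n) (j : Fin m) (x y : Fin n → ℝ),
      (∀ k : Fin n, (k : ℕ) < (i : ℕ) → x k = y k) → σ i j x = σ i j y)
    (Ω : Set (Fin n → ℝ)) (hΩ : IsOpen Ω)
    (u : (Fin n → ℝ) → ℝ) (husc : UpperSemicontinuousOn u Ω)
    (hu : ∀ φ : (Fin n → ℝ) → ℝ, ContDiffOn ℝ 2 φ Ω →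
      ∀ x ∈ Ω, (∀ y ∈ Ω, u y - φ y ≤ u x - φ x) → (D2X n m h σ φ x).PosSemidef)
    (ψ : (Fin n → ℝ) → ℝ)
    (hψ : ψ = fun x => ε * Real.exp (μ * (∑ j : Fin m, (x (Fin.castLE h j)) ^ 2) / 2)) :
    (∀ x : Fin n → ℝ,
        (D2X n m h σ ψ x - (ε * μ) • (1 : Matrix (Fin m) (Fin m) ℝ)).PosSemidef)
    ∧ (∀ φ : (Fin n → ℝ) → ℝ, ContDiffOn ℝ 2 φ Ω →
        ∀ x ∈ Ω, (∀ y ∈ Ω, (u y + ψ y) - φ y ≤ (u x + ψ x) - φ x) →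
          (D2X n m h σ φ x - (ε * μ) • (1 : Matrix (Fin m) (Fin m) ℝ)).PosSemidef) := by
  subst hψ
  refine ⟨fun x => D2X_psi_sub_psd n m h σ ε μ hε hμ x, ?_⟩
  intro φ hφ x hx hmax
  set ψf := fun y : Fin n → ℝ => ε * Real.exp (μ * (∑ k : Fin m, (y (Fin.castLE h k)) ^ 2) / 2)
    with hψf
  have hφ' : ContDiffOn ℝ 2 (fun y => φ y - ψf y) Ω :=
    hφ.sub ((contDiff_psi n m h ε μ).contDiffOn)
  have hmax' : ∀ y ∈ Ω, u y - (φ y - ψf y) ≤ u x - (φ x - ψf x) := by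
    intro y hy
    have := hmax y hy
    simp only [ψf] at this ⊢
    linarith
  have hpsd := hu _ hφ' x hx hmax'
  have hsplit := D2X_split n m h σ hσ_smooth ε μ Ω hΩ φ hφ x hx
  have heq : D2X n m h σ φ x - (ε * μ) • (1 : Matrix (Fin m) (Fin m) ℝ)
      = D2X n m h σ (fun y => φ y - ψf y) x
        + (D2X n m h σ ψf x - (ε * μ) • (1 : Matrix (Fin m) (Fin m) ℝ)) := by
    rw [hsplit]
    abel
  rw [heq]
  exact hpsd.add (D2X_psi_sub_psd n m h σ ε μ hε hμ x)
end
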